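/- For a real random variable X, iqf_X(0) = E[X⁻] and iqf_X(1) = E[X⁺] (with values in [0,∞]). -/

import Mathlib

open MeasureTheory Filter Set

noncomputable def cdf {Ω : Type*} [MeasurableSpace Ω] (P : Measure Ω) (X : Ω → ℝ) : ℝ → ℝ :=
  fun x => (P {ω | X ω ≤ x}).toReal

noncomputable def idf {Ω : Type*} [MeasurableSpace Ω] (P : Measure Ω) (X : Ω → ℝ) : ℝ → ℝ :=
  fun x => ∫ t in (0:ℝ)..x, cdf P X t

noncomputable def iqf {Ω : Type*} [MeasurableSpace Ω] (P : Measure Ω) (X : Ω → ℝ) : ℝ → EReal :=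
  fun u => ⨆ x : ℝ, ((x * u - idf P X x : ℝ) : EReal)

section Aux

lemma aux_coe_ennreal_iSup (f : ℕ → ENNReal) :
    ((⨆ i, f i : ENNReal) : EReal) = ⨆ i, ((f i : EReal)) := by
  apply le_antisymm
  · have h0 : (0 : EReal) ≤ ⨆ i, ((f i : EReal)) :=
      le_trans (EReal.coe_ennreal_nonneg (f 0)) (le_iSup (fun i => ((f i : EReal))) 0)
    obtain ⟨b, hb⟩ : (⨆ i, ((f i : EReal))) ∈ Set.range ((↑) : ENNReal → EReal) := by
      rw [EReal.range_coe_ennreal]; exact h0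
    rw [← hb, EReal.coe_ennreal_le_coe_ennreal_iff]
    exact iSup_le fun i => EReal.coe_ennreal_le_coe_ennreal_iff.mp
      (hb ▸ le_iSup (fun i => ((f i : EReal))) i)
  · exact iSup_le fun i => EReal.coe_ennreal_le_coe_ennreal_iff.mpr (le_iSup f i)

variable {Ω : Type*} [MeasurableSpace Ω] (P : Measure Ω) [IsProbabilityMeasure P]
  (X : Ω → ℝ) (hX : Measurable X)

lemma cdf_nonneg' (t : ℝ) : 0 ≤ cdf P X t := ENNReal.toReal_nonneg

lemma cdf_le_one' (t : ℝ) : cdf P X t ≤ 1 := by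
  have h : P {ω | X ω ≤ t} ≤ 1 := prob_le_one
  simpa [cdf] using ENNReal.toReal_mono ENNReal.one_ne_top h

lemma cdf_mono' : Monotone (cdf P X) := fun a b hab =>
  ENNReal.toReal_mono (measure_ne_top _ _) (measure_mono (fun ω h => le_trans h hab))

lemma ofReal_cdf' (t : ℝ) : ENNReal.ofReal (cdf P X t) = P {ω | X ω ≤ t} :=
  ENNReal.ofReal_toReal (measure_ne_top _ _)

lemma cdf_ii (a b : ℝ) : IntervalIntegrable (cdf P X) volume a b :=
  (cdf_mono' P X).intervalIntegrable

/-- key: ofReal of interval integral of cdf -/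
lemma ofReal_intervalIntegral_cdf {a b : ℝ} (hab : a ≤ b) :
    ENNReal.ofReal (∫ t in a..b, cdf P X t) =
      ∫⁻ t in Set.Ioc a b, ENNReal.ofReal (cdf P X t) := by
  rw [intervalIntegral.integral_of_le hab]
  exact ofReal_integral_eq_lintegral_ofReal
    (cdf_ii P X a b).1
    (ae_of_all _ fun t => cdf_nonneg' P X t)

lemma idf_sub_mono {x y : ℝ} (hxy : x ≤ y) :
    idf P X y - idf P X x = ∫ t in x..y, cdf P X t := by
  unfold idf
  rw [sub_eq_iff_eq_add, add_comm,
    intervalIntegral.integral_add_adjacent_intervals (cdf_ii P X 0 x) (cdf_ii P X x y)]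

lemma idf_diff_le {x y : ℝ} (hxy : x ≤ y) : idf P X y - idf P X x ≤ y - x := by
  rw [idf_sub_mono P X hxy]
  calc ∫ t in x..y, cdf P X t ≤ ∫ t in x..y, (1:ℝ) :=
        intervalIntegral.integral_mono_on hxy (cdf_ii P X x y) intervalIntegrable_const
          (fun t _ => cdf_le_one' P X t)
    _ = y - x := by simp

lemma idf_diff_nonneg {x y : ℝ} (hxy : x ≤ y) : 0 ≤ idf P X y - idf P X x := by
  rw [idf_sub_mono P X hxy]
  exact intervalIntegral.integral_nonneg hxy (fun t _ => cdf_nonneg' P X t)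

end Aux

section Main

variable {Ω : Type*} [MeasurableSpace Ω] (P : Measure Ω) [IsProbabilityMeasure P]
  (X : Ω → ℝ) (hX : Measurable X)

lemma idf_zero' : idf P X 0 = 0 := by simp [idf]

lemma part2 (hX : Measurable X) : iqf P X 1 = ((∫⁻ ω, ENNReal.ofReal (max (X ω) 0) ∂P : ENNReal) : EReal) := by
  have hmeas : ∀ t : ℝ, P {ω | t < X ω} = ENNReal.ofReal (1 - cdf P X t) := by
    intro t
    have hc : {ω | t < X ω} = {ω | X ω ≤ t}ᶜ := by ext ω; simp [not_le]
    simp only [cdf]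
    rw [hc, measure_compl (show MeasurableSet {ω | X ω ≤ t} from hX measurableSet_Iic) (measure_ne_top _ _), measure_univ,
      ENNReal.ofReal_sub _ ENNReal.toReal_nonneg, ENNReal.ofReal_one,
      ENNReal.ofReal_toReal (measure_ne_top _ _)]
  have key : (∫⁻ ω, ENNReal.ofReal (max (X ω) 0) ∂P) =
      ∫⁻ t in Set.Ioi (0:ℝ), ENNReal.ofReal (1 - cdf P X t) := by
    rw [lintegral_eq_lintegral_meas_lt (f := fun ω => max (X ω) 0) P
      (ae_of_all _ fun ω => le_max_right _ _) ((hX.max measurable_const).aemeasurable)]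
    refine setLIntegral_congr_fun measurableSet_Ioi (fun t ht => ?_)
    rw [← hmeas t]
    congr 1
    ext ω
    simp only [Set.mem_setOf_eq, lt_max_iff]
    exact ⟨fun h => h.resolve_right (asymm ht), Or.inl⟩
  have hIoi : Set.Ioi (0:ℝ) = ⋃ n : ℕ, Set.Ioc (0:ℝ) (n:ℝ) := by
    ext t
    simp only [Set.mem_Ioi, Set.mem_iUnion, Set.mem_Ioc]
    exact ⟨fun ht => (exists_nat_ge t).imp fun n hn => ⟨ht, hn⟩, fun ⟨n, h, _⟩ => h⟩
  have hmono : Monotone (fun n : ℕ => Set.Ioc (0:ℝ) (n:ℝ)) :=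
    fun m n h => Set.Ioc_subset_Ioc_right (Nat.cast_le.mpr h)
  have hdir : Directed (· ⊆ ·) (fun n : ℕ => Set.Ioc (0:ℝ) (n:ℝ)) := hmono.directed_le
  have hterm : ∀ n : ℕ, (∫⁻ t in Set.Ioc (0:ℝ) (n:ℝ), ENNReal.ofReal (1 - cdf P X t))
      = ENNReal.ofReal ((n:ℝ) - idf P X (n:ℝ)) := by
    intro n
    have hint : IntervalIntegrable (fun t => 1 - cdf P X t) volume 0 (n:ℝ) :=
      intervalIntegrable_const.sub (cdf_ii P X 0 (n:ℝ))
    have h1 : ∫ t in (0:ℝ)..(n:ℝ), (1 - cdf P X t) = (n:ℝ) - idf P X (n:ℝ) := by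
      rw [intervalIntegral.integral_sub intervalIntegrable_const (cdf_ii P X 0 (n:ℝ))]
      simp [idf]
    rw [← h1, intervalIntegral.integral_of_le (by positivity : (0:ℝ) ≤ (n:ℝ))]
    exact (ofReal_integral_eq_lintegral_ofReal hint.1
      (ae_of_all _ fun t => sub_nonneg.mpr (cdf_le_one' P X t))).symm
  have hnonneg : ∀ n : ℕ, (0:ℝ) ≤ (n:ℝ) - idf P X (n:ℝ) := by
    intro n
    have h := idf_diff_le P X (by positivity : (0:ℝ) ≤ (n:ℝ))
    rw [idf_zero'] at h
    linarith
  rw [key, hIoi, setLIntegral_iUnion_of_directed _ hdir, aux_coe_ennreal_iSup]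
  unfold iqf
  apply le_antisymm
  · refine iSup_le fun x => ?_
    obtain ⟨n, hn⟩ := exists_nat_ge x
    refine le_trans ?_ (le_iSup (fun n : ℕ =>
      ((∫⁻ t in Set.Ioc (0:ℝ) (n:ℝ), ENNReal.ofReal (1 - cdf P X t) : ENNReal) : EReal)) n)
    rw [hterm n, EReal.coe_ennreal_ofReal, max_eq_left (hnonneg n), EReal.coe_le_coe_iff]
    have h := idf_diff_le P X hn
    nlinarith
  · refine iSup_le fun n => ?_
    rw [hterm n, EReal.coe_ennreal_ofReal, max_eq_left (hnonneg n)]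
    refine le_trans (le_of_eq ?_) (le_iSup
      (fun x : ℝ => (((x * 1 - idf P X x : ℝ)) : EReal)) (n:ℝ))
    norm_num

lemma part1 (hX : Measurable X) : iqf P X 0 = ((∫⁻ ω, ENNReal.ofReal (max (-(X ω)) 0) ∂P : ENNReal) : EReal) := by
  have key : (∫⁻ ω, ENNReal.ofReal (max (-(X ω)) 0) ∂P) =
      ∫⁻ t in Set.Ioi (0:ℝ), ENNReal.ofReal (cdf P X (-t)) := by
    rw [lintegral_eq_lintegral_meas_le (f := fun ω => max (-(X ω)) 0) P
      (ae_of_all _ fun ω => le_max_right _ _) ((hX.neg.max measurable_const).aemeasurable)]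
    refine setLIntegral_congr_fun measurableSet_Ioi (fun t ht => ?_)
    rw [ofReal_cdf']
    congr 1
    ext ω
    simp only [Set.mem_setOf_eq, le_max_iff]
    constructor
    · intro h
      rcases h with h | h
      · linarith
      · exact absurd ht (not_lt.mpr h)
    · intro h; left; linarith
  have hneg : (∫⁻ t in Set.Ioi (0:ℝ), ENNReal.ofReal (cdf P X (-t)))
      = ∫⁻ s in Set.Iio (0:ℝ), ENNReal.ofReal (cdf P X s) := by
    have h := (Measure.measurePreserving_neg (volume : Measure ℝ)).setLIntegral_comp_preimage_emb
      measurableEmbedding_neg (fun s => ENNReal.ofReal (cdf P X s)) (Set.Iio 0)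
    rw [show (Neg.neg ⁻¹' Set.Iio (0:ℝ)) = Set.Ioi 0 from by ext t; simp] at h
    exact h
  have hIio : Set.Iio (0:ℝ) = ⋃ n : ℕ, Set.Ioo (-(n:ℝ)) 0 := by
    ext t
    simp only [Set.mem_Iio, Set.mem_iUnion, Set.mem_Ioo]
    constructor
    · intro ht
      obtain ⟨n, hn⟩ := exists_nat_gt (-t)
      exact ⟨n, by linarith, ht⟩
    · rintro ⟨n, _, h⟩; exact h
  have hmono : Monotone (fun n : ℕ => Set.Ioo (-(n:ℝ)) 0) :=
    fun m n h => Set.Ioo_subset_Ioo_left (neg_le_neg (Nat.cast_le.mpr h))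
  have hdir : Directed (· ⊆ ·) (fun n : ℕ => Set.Ioo (-(n:ℝ)) 0) := hmono.directed_le
  have hterm : ∀ n : ℕ, (∫⁻ t in Set.Ioo (-(n:ℝ)) 0, ENNReal.ofReal (cdf P X t))
      = ENNReal.ofReal (-idf P X (-(n:ℝ))) := by
    intro n
    rw [Measure.restrict_congr_set Ioo_ae_eq_Ioc,
      ← ofReal_intervalIntegral_cdf P X (neg_nonpos.mpr (Nat.cast_nonneg n))]
    congr 1
    have : idf P X (-(n:ℝ)) = -∫ t in (-(n:ℝ))..(0:ℝ), cdf P X t := by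
      rw [show idf P X (-(n:ℝ)) = ∫ t in (0:ℝ)..(-(n:ℝ)), cdf P X t from rfl,
        intervalIntegral.integral_symm]
    rw [this, neg_neg]
  have hnonneg : ∀ n : ℕ, (0:ℝ) ≤ -idf P X (-(n:ℝ)) := by
    intro n
    have h := idf_diff_nonneg P X (neg_nonpos.mpr (Nat.cast_nonneg n))
    rw [idf_zero'] at h
    linarith
  rw [key, hneg, hIio, setLIntegral_iUnion_of_directed _ hdir, aux_coe_ennreal_iSup]
  unfold iqf
  apply le_antisymm
  · refine iSup_le fun x => ?_
    obtain ⟨n, hn⟩ := exists_nat_ge (-x)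
    refine le_trans ?_ (le_iSup (fun n : ℕ =>
      ((∫⁻ t in Set.Ioo (-(n:ℝ)) 0, ENNReal.ofReal (cdf P X t) : ENNReal) : EReal)) n)
    rw [hterm n, EReal.coe_ennreal_ofReal, max_eq_left (hnonneg n), EReal.coe_le_coe_iff]
    have h := idf_diff_nonneg P X (by linarith : -(n:ℝ) ≤ x)
    nlinarith
  · refine iSup_le fun n => ?_
    rw [hterm n, EReal.coe_ennreal_ofReal, max_eq_left (hnonneg n)]
    refine le_trans (le_of_eq ?_) (le_iSup
      (fun x : ℝ => (((x * 0 - idf P X x : ℝ)) : EReal)) (-(n:ℝ)))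
    norm_num

end Main

theorem stmt10 {Ω : Type*} [MeasurableSpace Ω] (P : Measure Ω) [IsProbabilityMeasure P]
    (X : Ω → ℝ) (hX : Measurable X) :
    iqf P X 0 = ((∫⁻ ω, ENNReal.ofReal (max (-(X ω)) 0) ∂P : ENNReal) : EReal) ∧
    iqf P X 1 = ((∫⁻ ω, ENNReal.ofReal (max (X ω) 0) ∂P : ENNReal) : EReal) :=
  ⟨part1 P X hX, part2 P X hX⟩
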